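/- Assume M is symmetric positive definite. Starting from u₀, let u_j = q(u_{j−1}) for j = 1, …, m, and let u_{m+1} be produced by a single NGMRES(m) step from u₀, …, u_m (the case m = k of one-step NGMRES). Then ‖r_{m+1}‖ ≤ χ(m+1) · ‖r₀‖. -/

import Mathlib

open Matrix Polynomial Set

noncomputable section

/-- Matrix–vector product, landing in Euclidean space. -/
def mulVecE {n : ℕ} (M : Matrix (Fin n) (Fin n) ℝ) (v : EuclideanSpace ℝ (Fin n)) :
    EuclideanSpace ℝ (Fin n) :=
  WithLp.toLp 2 (M.mulVec v)

/-- Residual `r(u) = A u - b`. -/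
def res {n : ℕ} (A : Matrix (Fin n) (Fin n) ℝ) (b u : EuclideanSpace ℝ (Fin n)) :
    EuclideanSpace ℝ (Fin n) :=
  mulVecE A u - b

/-- Richardson fixed-point map `q(u) = (I - A) u + b = M u + b` with `M = I - A`. -/
def fp {n : ℕ} (A : Matrix (Fin n) (Fin n) ℝ) (b u : EuclideanSpace ℝ (Fin n)) :
    EuclideanSpace ℝ (Fin n) :=
  mulVecE (1 - A) u + b

/-- The NGMRES(m) least-squares objective at step `k`:
`β ↦ ‖r(q(u_k)) + Σ_{i=0}^m β_i (r(q(u_k)) - r(u_{k-i}))‖`. -/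
def ngObj {n : ℕ} (A : Matrix (Fin n) (Fin n) ℝ) (b : EuclideanSpace ℝ (Fin n))
    (m : ℕ) (prev : ℕ → EuclideanSpace ℝ (Fin n)) (k : ℕ) (β : Fin (m+1) → ℝ) : ℝ :=
  ‖res A b (fp A b (prev k)) +
    ∑ i : Fin (m+1), β i • (res A b (fp A b (prev k)) - res A b (prev (k - (i : ℕ))))‖

/-- `next` is produced from `prev (k-m), …, prev k` by a single NGMRES(m) step:
`next = q(u_k) + Σ_{i=0}^m β_i (q(u_k) - u_{k-i})` where `β` minimizes the
least-squares objective `ngObj`. -/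
def NGMRESStep {n : ℕ} (A : Matrix (Fin n) (Fin n) ℝ) (b : EuclideanSpace ℝ (Fin n))
    (m : ℕ) (prev : ℕ → EuclideanSpace ℝ (Fin n)) (k : ℕ)
    (next : EuclideanSpace ℝ (Fin n)) : Prop :=
  ∃ β : Fin (m+1) → ℝ,
    (∀ γ : Fin (m+1) → ℝ, ngObj A b m prev k β ≤ ngObj A b m prev k γ) ∧
    next = fp A b (prev k) +
      ∑ i : Fin (m+1), β i • (fp A b (prev k) - prev (k - (i : ℕ)))

/-- The spectral (ℓ²-operator) norm of a matrix. -/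
def opNorm {n : ℕ} (M : Matrix (Fin n) (Fin n) ℝ) : ℝ :=
  ‖(Matrix.toEuclideanCLM (𝕜 := ℝ) M : EuclideanSpace ℝ (Fin n) →L[ℝ] EuclideanSpace ℝ (Fin n))‖

/-- The 2-norm condition number `κ₂(U) = ‖U‖ ‖U⁻¹‖`. -/
def condNum {n : ℕ} (U : Matrix (Fin n) (Fin n) ℝ) : ℝ :=
  opNorm U * opNorm U⁻¹

/-- `ε(a,b,s)`: minimum over real polynomials `p` of degree at most `s` with `p(1) = 1`
of `max_{t ∈ [1/b, 1/a]} |p(t)|`. -/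
def eps (a b : ℝ) (s : ℕ) : ℝ :=
  sInf {t : ℝ | ∃ p : Polynomial ℝ, p.natDegree ≤ s ∧ p.eval 1 = 1 ∧
    t = sSup ((fun x => |p.eval x|) '' Set.Icc (1/b) (1/a))}

/-- `χ(s)`: minimum over real polynomials `p` of degree at most `s` with `p(1) = 1`
of `max_{λ ∈ Σ(M)} |p(λ)|`, where `Σ(M)` is the set of eigenvalues of `M`. -/
def chiSp {n : ℕ} (M : Matrix (Fin n) (Fin n) ℝ) (s : ℕ) : ℝ :=
  sInf {t : ℝ | ∃ p : Polynomial ℝ, p.natDegree ≤ s ∧ p.eval 1 = 1 ∧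
    t = sSup ((fun x => |p.eval x|) '' spectrum ℝ M)}

/-- The Krylov subspace `K_k(A, r) = span{r, Ar, …, A^{k-1} r}`. -/
def Krylov {n : ℕ} (A : Matrix (Fin n) (Fin n) ℝ) (r : EuclideanSpace ℝ (Fin n)) (k : ℕ) :
    Submodule ℝ (EuclideanSpace ℝ (Fin n)) :=
  Submodule.span ℝ (Set.range fun i : Fin k => mulVecE (A ^ (i : ℕ)) r)

/-- The matrix `S_k = [u_{k-m+1}-u_{k-m}, …, u_k-u_{k-1}, q(u_k)-u_k] ∈ ℝ^{n×(m+1)}`. -/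
def Smat {n : ℕ} (A : Matrix (Fin n) (Fin n) ℝ) (b : EuclideanSpace ℝ (Fin n))
    (prev : ℕ → EuclideanSpace ℝ (Fin n)) (k m : ℕ) :
    Matrix (Fin n) (Fin (m+1)) ℝ :=
  Matrix.of fun r c =>
    if (c : ℕ) < m then prev (k - m + c + 1) r - prev (k - m + c) r
    else fp A b (prev k) r - prev k r

/-- `u` is the sequence of aNGMRES(m, p) iterates (with `m = ⊤` giving aNGMRES(∞, p)):
if `p ∤ k` then `u_k = q(u_{k-1})`, and if `p ∣ k` then `u_k` is produced by one
NGMRES(min(m, k-1)) step from `u_{k-1-m_k}, …, u_{k-1}`. -/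
def aNGMRES {n : ℕ} (A : Matrix (Fin n) (Fin n) ℝ) (b : EuclideanSpace ℝ (Fin n))
    (m : ℕ∞) (p : ℕ) (u : ℕ → EuclideanSpace ℝ (Fin n)) : Prop :=
  ∀ k, 1 ≤ k →
    (¬ p ∣ k → u k = fp A b (u (k-1))) ∧
    (p ∣ k → NGMRESStep A b (min m ((k : ℕ∞) - 1)).toNat u (k-1) (u k))

/-!
The residuals of the Richardson iterates are `r_j = M^j r_0`, so the vectors over which one
NGMRES(m) step minimises are exactly `p(M) r_0` for the polynomials `p` of degree at most `m + 1`
with `p(1) = 1`: the affine weights `1 + Σ β_i` and `-β_i` are the coefficients of `p`.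
Since `M` is symmetric, the spectral theorem gives `‖p(M)‖ = max_{λ ∈ Σ(M)} |p(λ)|`, and
minimising over `p` yields `χ(m + 1)`.
-/

theorem sum_range_smul_eq_add_sum_smul_sub {R V : Type*} [Ring R] [AddCommGroup V]
    [Module R V] (m : ℕ) (c : ℕ → R) (w : ℕ → V) (hc : ∑ j ∈ Finset.range (m + 2), c j = 1) :
    ∑ j ∈ Finset.range (m + 2), c j • w j =
      w (m + 1) + ∑ i : Fin (m + 1), (-c (m - i)) • (w (m + 1) - w (m - i)) := by
  have hlast : c (m + 1) = 1 - ∑ j ∈ Finset.range (m + 1), c j := by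
    rw [Finset.sum_range_succ] at hc; rw [← hc]; abel
  have hrefl : ∀ f : ℕ → V, ∑ i : Fin (m + 1), f (m - i) = ∑ j ∈ Finset.range (m + 1), f j :=
    fun f => (Fin.sum_univ_eq_sum_range (fun i => f (m - i)) _).trans
      (Finset.sum_range_reflect f _)
  simp only [neg_smul, smul_sub, Finset.sum_sub_distrib, Finset.sum_neg_distrib]
  rw [hrefl (fun j => c j • w (m + 1)), hrefl (fun j => c j • w j), ← Finset.sum_smul,
    Finset.sum_range_succ, hlast, sub_smul, one_smul]
  abel

section

variable {n : ℕ}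

theorem le_chiSp_mul (M : Matrix (Fin n) (Fin n) ℝ) (s : ℕ) {x c : ℝ} (hc : 0 ≤ c)
    (h : ∀ p : ℝ[X], p.natDegree ≤ s → p.eval 1 = 1 →
      x ≤ sSup ((fun t => |p.eval t|) '' spectrum ℝ M) * c) :
    x ≤ chiSp M s * c := by
  rcases hc.eq_or_lt with rfl | hc
  · simpa using h 1 (by simp) (by simp)
  · rw [← div_le_iff₀ hc]
    refine le_csInf ⟨_, 1, by simp, by simp, rfl⟩ ?_
    rintro _ ⟨p, hp, hp1, rfl⟩
    exact (div_le_iff₀ hc).mpr (h p hp hp1)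

open scoped Matrix.Norms.L2Operator in
theorem Matrix.IsHermitian.opNorm_aeval_le {M : Matrix (Fin n) (Fin n) ℝ}
    (hM : M.IsHermitian) (p : ℝ[X]) :
    opNorm (aeval M p) ≤ sSup ((fun x => |p.eval x|) '' spectrum ℝ M) := by
  have hdiag : aeval M p = Unitary.conjStarAlgAut ℝ _ hM.eigenvectorUnitary
      (diagonal fun i => p.eval (hM.eigenvalues i)) := by
    conv_lhs => rw [hM.spectral_theorem]
    rw [aeval_algHom_apply, ← diagonalAlgHom_apply (R := ℝ), aeval_algHom_apply, aeval_pi_apply]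
    simp
  have hbdd : BddAbove ((fun x => |p.eval x|) '' spectrum ℝ M) :=
    (Matrix.finite_real_spectrum.image _).bddAbove
  have hnonneg : 0 ≤ sSup ((fun x => |p.eval x|) '' spectrum ℝ M) :=
    Real.sSup_nonneg <| by rintro _ ⟨_, _, rfl⟩; exact abs_nonneg _
  rw [opNorm, ← cstar_norm_def, hdiag, Unitary.conjStarAlgAut_apply, ← Unitary.coe_star,
    CStarRing.norm_mul_coe_unitary, CStarRing.norm_coe_unitary_mul, l2_opNorm_diagonal]
  refine (pi_norm_le_iff_of_nonneg hnonneg).mpr fun i => ?_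
  rw [Real.norm_eq_abs]
  exact le_csSup hbdd ⟨_, hM.eigenvalues_mem_spectrum_real i, rfl⟩

theorem mulVecE_eq_toEuclideanCLM (M : Matrix (Fin n) (Fin n) ℝ) (v : EuclideanSpace ℝ (Fin n)) :
    mulVecE M v = toEuclideanCLM (𝕜 := ℝ) M v := rfl

theorem mulVecE_mulVecE (M N : Matrix (Fin n) (Fin n) ℝ) (v : EuclideanSpace ℝ (Fin n)) :
    mulVecE M (mulVecE N v) = mulVecE (M * N) v :=
  congrArg (WithLp.toLp 2) (mulVec_mulVec v M N)

theorem norm_mulVecE_le (M : Matrix (Fin n) (Fin n) ℝ) (v : EuclideanSpace ℝ (Fin n)) :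
    ‖mulVecE M v‖ ≤ opNorm M * ‖v‖ :=
  (toEuclideanCLM (𝕜 := ℝ) M).le_opNorm v

theorem res_fp (A : Matrix (Fin n) (Fin n) ℝ) (b v : EuclideanSpace ℝ (Fin n)) :
    res A b (fp A b v) = mulVecE (1 - A) (res A b v) := by
  simp only [res, fp, mulVecE_eq_toEuclideanCLM, map_sub, map_one, map_add, _root_.sub_apply,
    one_apply_eq_self]
  abel

theorem res_add_sum_smul_sub {ι : Type*} (s : Finset ι) (A : Matrix (Fin n) (Fin n) ℝ)
    (b x : EuclideanSpace ℝ (Fin n)) (β : ι → ℝ) (y : ι → EuclideanSpace ℝ (Fin n)) :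
    res A b (x + ∑ i ∈ s, β i • (x - y i)) =
      res A b x + ∑ i ∈ s, β i • (res A b x - res A b (y i)) := by
  simp only [res, mulVecE_eq_toEuclideanCLM, map_add, map_sum, map_smul, map_sub,
    sub_sub_sub_cancel_right]
  abel

theorem NGMRESStep.norm_res_le {A : Matrix (Fin n) (Fin n) ℝ} {b : EuclideanSpace ℝ (Fin n)}
    {m k : ℕ} {prev : ℕ → EuclideanSpace ℝ (Fin n)} {next : EuclideanSpace ℝ (Fin n)}
    (h : NGMRESStep A b m prev k next) (γ : Fin (m + 1) → ℝ) :
    ‖res A b next‖ ≤ ngObj A b m prev k γ := by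
  obtain ⟨β, hβ, rfl⟩ := h
  rw [res_add_sum_smul_sub]
  exact hβ γ

theorem mulVecE_aeval_eq_sum (M : Matrix (Fin n) (Fin n) ℝ) {p : ℝ[X]} {d : ℕ}
    (hp : p.natDegree < d) (v : EuclideanSpace ℝ (Fin n)) :
    mulVecE (aeval M p) v = ∑ j ∈ Finset.range d, p.coeff j • mulVecE (M ^ j) v := by
  simp only [aeval_eq_sum_range' hp, mulVecE_eq_toEuclideanCLM, map_sum, map_smul, _root_.sum_apply,
    _root_.smul_apply]

theorem res_richardson {A : Matrix (Fin n) (Fin n) ℝ} {b : EuclideanSpace ℝ (Fin n)} {m : ℕ}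
    {u : ℕ → EuclideanSpace ℝ (Fin n)} (hfp : ∀ j, 1 ≤ j → j ≤ m → u j = fp A b (u (j - 1)))
    {j : ℕ} (hj : j ≤ m) : res A b (u j) = mulVecE ((1 - A) ^ j) (res A b (u 0)) := by
  induction j with
  | zero => simp [mulVecE_eq_toEuclideanCLM]
  | succ j ih =>
    rw [hfp (j + 1) j.succ_pos hj, Nat.add_sub_cancel, res_fp, ih (by omega), mulVecE_mulVecE,
      ← pow_succ']

theorem ngObj_neg_coeff_eq_norm_aeval {m : ℕ} {A : Matrix (Fin n) (Fin n) ℝ}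
    {b : EuclideanSpace ℝ (Fin n)} {u : ℕ → EuclideanSpace ℝ (Fin n)}
    (hfp : ∀ j, 1 ≤ j → j ≤ m → u j = fp A b (u (j - 1))) {p : ℝ[X]}
    (hdeg : p.natDegree ≤ m + 1) (hp1 : p.eval 1 = 1) :
    ngObj A b m u m (fun i => -p.coeff (m - i)) =
      ‖mulVecE (aeval (1 - A) p) (res A b (u 0))‖ := by
  have hlt : p.natDegree < m + 2 := by omega
  have hsum : ∑ j ∈ Finset.range (m + 2), p.coeff j = 1 := by
    simpa using (eval_eq_sum_range' hlt 1).symm.trans hp1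
  rw [mulVecE_aeval_eq_sum _ hlt, sum_range_smul_eq_add_sum_smul_sub m _ _ hsum, ngObj, res_fp,
    res_richardson hfp le_rfl, mulVecE_mulVecE, ← pow_succ']
  simp only [res_richardson hfp (Nat.sub_le m _)]

end

theorem stmt_6_general {n m : ℕ} (A : Matrix (Fin n) (Fin n) ℝ)
    (hPD : ((1 : Matrix (Fin n) (Fin n) ℝ) - A).PosDef)
    (b : EuclideanSpace ℝ (Fin n)) (u : ℕ → EuclideanSpace ℝ (Fin n))
    (hfp : ∀ j, 1 ≤ j → j ≤ m → u j = fp A b (u (j-1)))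
    (next : EuclideanSpace ℝ (Fin n)) (hstep : NGMRESStep A b m u m next) :
    ‖res A b next‖ ≤ chiSp ((1 : Matrix (Fin n) (Fin n) ℝ) - A) (m+1) * ‖res A b (u 0)‖ := by
  refine le_chiSp_mul _ _ (norm_nonneg _) fun p hdeg hp1 => ?_
  calc ‖res A b next‖ ≤ ngObj A b m u m (fun i => -p.coeff (m - i)) := hstep.norm_res_le _
    _ = ‖mulVecE (aeval (1 - A) p) (res A b (u 0))‖ := ngObj_neg_coeff_eq_norm_aeval hfp hdeg hp1
    _ ≤ opNorm (aeval (1 - A) p) * ‖res A b (u 0)‖ := norm_mulVecE_le _ _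
    _ ≤ _ := by gcongr; exact hPD.1.opNorm_aeval_le p

/-- one-step NGMRES(m) with m = k in the SPD case,
`‖r_{m+1}‖ ≤ χ(m+1) · ‖r₀‖`. -/
theorem stmt_6 {n m : ℕ} (A : Matrix (Fin n) (Fin n) ℝ) (hA : IsUnit A)
    (hPD : ((1 : Matrix (Fin n) (Fin n) ℝ) - A).PosDef)
    (b : EuclideanSpace ℝ (Fin n)) (u : ℕ → EuclideanSpace ℝ (Fin n))
    (hfp : ∀ j, 1 ≤ j → j ≤ m → u j = fp A b (u (j-1)))
    (next : EuclideanSpace ℝ (Fin n)) (hstep : NGMRESStep A b m u m next) :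
    ‖res A b next‖ ≤ chiSp ((1 : Matrix (Fin n) (Fin n) ℝ) - A) (m+1) * ‖res A b (u 0)‖ :=
  stmt_6_general A hPD b u hfp next hstep

end
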